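/- arXiv:1406.6740 — 2 statements merged into one kernel-verified Lean document; each statement's English description precedes it below -/
import Mathlib

section
/- Assume the forward spiral condition V_{N+k} = M·T(V_{k−1}) for all k ≥ 1, the normalization det ρ_j = 1 for j = 0, 1, …, N, and that a_j ≠ 0 for all j. If det(V_{N+1}, M·V_1, V_N) = 0, then a_N = a_1. -/
open Matrix

/-- The 3×3 matrix with columns `u, v, w`. -/
def colMat (u v w : Fin 3 → ℝ) : Matrix (Fin 3) (Fin 3) ℝ :=
  Matrix.of fun i j => ![u, v, w] j i

/-- `det(u,v,w)`: determinant of the 3×3 matrix with columns `u, v, w`. -/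
def det3 (u v w : Fin 3 → ℝ) : ℝ := (colMat u v w).det

lemma det3_eq (u v w : Fin 3 → ℝ) : det3 u v w =
    u 0 * v 1 * w 2 - u 0 * w 1 * v 2 - v 0 * u 1 * w 2 + v 0 * w 1 * u 2
      + w 0 * u 1 * v 2 - w 0 * v 1 * u 2 := by
  simp [det3, colMat, Matrix.det_fin_three]

lemma crossCross3 (p q r s : Fin 3 → ℝ) :
    crossProduct (crossProduct p q) (crossProduct r s)
      = det3 p q s • r - det3 p q r • s := by
  funext i
  fin_cases i <;>
    simp [cross_apply, det3_eq] <;> ring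

lemma det3_comb1 (u v w : Fin 3 → ℝ) (x y z : ℝ) :
    det3 v w (x • w + y • v + z • u) = z * det3 u v w := by
  simp [det3_eq]; ring

lemma det3_comb2 (u v w : Fin 3 → ℝ) (x y z : ℝ) :
    det3 u w (x • w + y • v + z • u) = -y * det3 u v w := by
  simp [det3_eq]; ring

lemma det3_swap23 (u v w : Fin 3 → ℝ) : det3 u w v = - det3 u v w := by
  simp [det3_eq]; ring

lemma det3_cyc (u v w : Fin 3 → ℝ) : det3 w u v = det3 u v w := by
  simp [det3_eq]; ring

/-- under the forward spiral condition, the normalization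
`det ρ_j = 1` for `j = 0, …, N`, and `a_j ≠ 0` for all `j`, the seed condition
`det(V_{N+1}, M·V₁, V_N) = 0` implies `a_N = a₁`. -/
theorem aN_eq_a1 (N : ℕ) (hN : 5 ≤ N)
    (V : ℤ → Fin 3 → ℝ) (a b c : ℤ → ℝ)
    (hrec : ∀ j : ℤ, V (j + 3) = a j • V (j + 2) + b j • V (j + 1) + c j • V j)
    (ρ : ℤ → Matrix (Fin 3) (Fin 3) ℝ)
    (hρ : ∀ j : ℤ, ρ j = colMat (V j) (V (j + 1)) (V (j + 2)))
    (hρinv : ∀ j : ℤ, IsUnit (ρ j))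
    (M : Matrix (Fin 3) (Fin 3) ℝ) (hM : M.det = 1)
    (T : ℤ → Fin 3 → ℝ)
    (hT : ∀ j : ℤ, T j =
      crossProduct (crossProduct (V (j - 1)) (V (j + 1))) (crossProduct (V j) (V (j + 2))))
    (hfwd : ∀ k : ℤ, 1 ≤ k → V ((N : ℤ) + k) = M.mulVec (T (k - 1)))
    (hnorm : ∀ j : ℤ, 0 ≤ j → j ≤ (N : ℤ) → (ρ j).det = 1)
    (ha : ∀ j : ℤ, a j ≠ 0)
    (hseed : det3 (V ((N : ℤ) + 1)) (M.mulVec (V 1)) (V (N : ℤ)) = 0) :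
    a (N : ℤ) = a 1 := by
  set n : ℤ := (N : ℤ) with hn
  -- normalized determinants as det3
  have hd : ∀ j : ℤ, 0 ≤ j → j ≤ n → det3 (V j) (V (j+1)) (V (j+2)) = 1 := by
    intro j h0 h1
    have := hnorm j h0 h1
    rwa [hρ j] at this
  have hd0 := hd 0 (by omega) (by omega)
  have hd1 := hd 1 (by omega) (by omega)
  have hd2 := hd 2 (by omega) (by omega)
  have hdN := hd n (by omega) le_rfl
  norm_num at hd0 hd1 hd2
  -- recurrences
  have hrec0 : V 3 = a 0 • V 2 + b 0 • V 1 + c 0 • V 0 := by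
    have := hrec 0; norm_num at this; exact this
  have hrec1 : V 4 = a 1 • V 3 + b 1 • V 2 + c 1 • V 1 := by
    have := hrec 1; norm_num at this; exact this
  have hrecN : V (n+3) = a n • V (n+2) + b n • V (n+1) + c n • V n := hrec n
  -- c 1 = 1
  have hc1 : c 1 = 1 := by
    have h := hd2
    rw [hrec1, det3_comb1 (V 1) (V 2) (V 3) (a 1) (b 1) (c 1), hd1] at h
    linarith
  -- T 1 and T 2
  have hT1 : T 1 = V 3 - b 0 • V 1 := by
    have h := hT 1
    rw [show (1:ℤ)-1 = 0 by norm_num, show (1:ℤ)+1 = 2 by norm_num,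
      show (1:ℤ)+2 = 3 by norm_num] at h
    rw [crossCross3, hrec0, det3_comb2 (V 0) (V 1) (V 2) (a 0) (b 0) (c 0),
      det3_swap23 (V 0) (V 1) (V 2), hd0] at h
    rw [h, hrec0]; module
  have hT2 : T 2 = a 1 • V 3 + V 1 := by
    have h := hT 2
    rw [show (2:ℤ)-1 = 1 by norm_num, show (2:ℤ)+1 = 3 by norm_num,
      show (2:ℤ)+2 = 4 by norm_num] at h
    rw [crossCross3, hrec1, det3_comb2 (V 1) (V 2) (V 3) (a 1) (b 1) (c 1),
      det3_swap23 (V 1) (V 2) (V 3), hd1, hc1] at h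
    rw [h]; module
  -- forward spiral values
  have hf2 : V (n+2) = M.mulVec (V 3) - b 0 • M.mulVec (V 1) := by
    have h := hfwd 2 (by norm_num)
    rw [show (2:ℤ)-1 = 1 by norm_num, hT1] at h
    rw [h, Matrix.mulVec_sub, Matrix.mulVec_smul]
  have hf3 : V (n+3) = a 1 • M.mulVec (V 3) + M.mulVec (V 1) := by
    have h := hfwd 3 (by norm_num)
    rw [show (3:ℤ)-1 = 2 by norm_num, hT2] at h
    rw [h, Matrix.mulVec_add, Matrix.mulVec_smul]
  -- the linear functional D x = det3 (V n) (V (n+1)) x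
  have hD1 : det3 (V n) (V (n+1)) (M.mulVec (V 1)) = 0 := by
    rw [det3_cyc]; exact hseed
  have hD3 : det3 (V n) (V (n+1)) (M.mulVec (V 3)) = 1 := by
    have h := hdN
    rw [hf2] at h
    simp only [det3_eq, Pi.sub_apply, Pi.smul_apply, smul_eq_mul] at h hD1 ⊢
    linear_combination h + b 0 * hD1
  -- main equation
  have hmain : a 1 • M.mulVec (V 3) + M.mulVec (V 1)
      = a n • (M.mulVec (V 3) - b 0 • M.mulVec (V 1)) + b n • V (n+1) + c n • V n := by
    rw [← hf2, ← hf3]; exact hrecN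
  have hfin := congrArg (fun x => det3 (V n) (V (n+1)) x) hmain
  simp only [det3_eq, Pi.add_apply, Pi.sub_apply, Pi.smul_apply, smul_eq_mul] at hfin hD1 hD3
  linear_combination -hfin + (1 + a n * b 0) * hD1 + (a 1 - a n) * hD3
end

section
/- Assume the forward spiral condition V_{N+k} = M·T(V_{k−1}) for all k ≥ 1, the backward spiral condition V_{−k} = M⁻¹·T̄(V_{N−k+1}) for all k ≥ 1, the normalization det ρ_j = 1 for j = 0, 1, …, N, that a_j ≠ 0 for all j, and the seed conditions det(V_{N+1}, M·V_1, V_N) = 0 and det(M·V_0, V_N, V_{N−1}) = 0. Set A_j := c_j + a_j·b_{j−1} and assume A_0, A_1, A_2 and c_N + b_N·a_{N−2} are nonzero. Then: (i) c_N = (c_N + b_N·a_{N−2})·c_{N+1}; (ii) c_{−1} = A_0·A_1/c_N; (iii) b_N = (c_N/a_{N−2})·(c_N/(A_1·A_2) − 1); and (iv) a_{−1} = c_{N+1}·a_{N−1}·a_{N−2}·(1 + a_1·b_0)/(c_N·a_0). -/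
open Matrix

/-!
Since `det ρ_{j+1} = c_j · det ρ_j`, the normalization forces `c_j = 1` for `0 ≤ j < N` and
`c_{-1} · det ρ_{-1} = 1`. Expanding the double cross products gives
`T(V_{j+1}) = det ρ_j · (a_j V_{j+2} + c_j V_j)` and
`(V_{j+2} × V_{j+3}) × (V_j × V_{j+1}) = det ρ_j · (V_{j+3} - a_j V_{j+2})`, so that
`det(T(V_{j+1}), T(V_{j+2}), T(V_{j+3})) = det ρ_j (det ρ_{j+1})² det ρ_{j+2} A_{j+1} A_{j+2}`.
As `det M = 1`, the forward condition turns this into the values of `c_N` and `c_{N+1} c_N`.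
The two spiral conditions also express `M V_{-1}`, `M V_0` and `M V_1` through
`V_{N-1}, …, V_{N+3}`; substituting them into `V_{N+1} = M T(V_0)` and comparing coefficients
in the basis `V_N, V_{N+1}, V_{N+2}` gives two scalar relations, and the seed condition
`det(M V_0, V_N, V_{N-1}) = 0` gives `a_{N-1} = a_0 c_{-1}`. The four identities are then
field arithmetic.
-/

lemma det3_eq_dotProduct_cross (u v w : Fin 3 → ℝ) : det3 u v w = u ⬝ᵥ v ⨯₃ w := by
  rw [triple_product_eq_det, det3, colMat, ← det_transpose]
  rfl

lemma det3_apply (u v w : Fin 3 → ℝ) : det3 u v w =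
    u 0 * (v 1 * w 2 - v 2 * w 1) - v 0 * (u 1 * w 2 - u 2 * w 1) +
      w 0 * (u 1 * v 2 - u 2 * v 1) := by
  rw [det3_eq_dotProduct_cross, cross_apply, vec3_dotProduct]
  simp only [cons_val]
  ring

lemma det3_smul_left (r : ℝ) (u v w : Fin 3 → ℝ) : det3 (r • u) v w = r * det3 u v w := by
  simp only [det3_apply, Pi.smul_apply, smul_eq_mul]
  ring

lemma det3_mulVec (M : Matrix (Fin 3) (Fin 3) ℝ) (u v w : Fin 3 → ℝ) :
    det3 (M *ᵥ u) (M *ᵥ v) (M *ᵥ w) = M.det * det3 u v w := by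
  have h : colMat (M *ᵥ u) (M *ᵥ v) (M *ᵥ w) = M * colMat u v w := by
    ext i j
    fin_cases j <;> simp [colMat, mul_apply, mulVec, dotProduct]
  rw [det3, h, det_mul, det3]

lemma colMat_mulVec (u v w : Fin 3 → ℝ) (x y z : ℝ) :
    colMat u v w *ᵥ ![x, y, z] = x • u + y • v + z • w := by
  ext i
  simp only [mulVec, dotProduct, colMat, cons_val', cons_val_fin_one, of_apply, Fin.sum_univ_three,
    cons_val_zero, cons_val_one, cons_val, Pi.add_apply, Pi.smul_apply, smul_eq_mul]
  ring

lemma eq_of_smul_add_smul_add_smul_eq {u v w : Fin 3 → ℝ} (hd : det3 u v w ≠ 0)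
    {x y z x' y' z' : ℝ} (h : x • u + y • v + z • w = x' • u + y' • v + z' • w) :
    x = x' ∧ y = y' ∧ z = z' := by
  rw [← colMat_mulVec, ← colMat_mulVec] at h
  simpa using mulVec_injective_of_det_ne_zero hd h

lemma cross_cross_cross (p q r s : Fin 3 → ℝ) :
    (p ⨯₃ q) ⨯₃ (r ⨯₃ s) = det3 p q s • r - det3 p q r • s := by
  rw [cross_cross_eq_smul_sub_smul', dotProduct_comm, triple_product_permutation s,
    triple_product_permutation r, det3_eq_dotProduct_cross, det3_eq_dotProduct_cross]

/-- `det ρ_j`. -/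
def frameDet (V : ℤ → Fin 3 → ℝ) (j : ℤ) : ℝ := det3 (V j) (V (j + 1)) (V (j + 2))

/-- `T(V_j)`. -/
def pentagramMap (V : ℤ → Fin 3 → ℝ) (j : ℤ) : Fin 3 → ℝ :=
  (V (j - 1) ⨯₃ V (j + 1)) ⨯₃ (V j ⨯₃ V (j + 2))

section Recurrence

variable {V : ℤ → Fin 3 → ℝ} {a b c : ℤ → ℝ}

lemma frameDet_succ
    (hrec : ∀ j, V (j + 3) = a j • V (j + 2) + b j • V (j + 1) + c j • V j)
    (j : ℤ) : frameDet V (j + 1) = c j * frameDet V j := by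
  rw [frameDet, frameDet, show j + 1 + 1 = j + 2 by ring, show j + 1 + 2 = j + 3 by ring, hrec]
  simp only [det3_apply, Pi.add_apply, Pi.smul_apply, smul_eq_mul]
  ring

lemma pentagramMap_succ
    (hrec : ∀ j, V (j + 3) = a j • V (j + 2) + b j • V (j + 1) + c j • V j)
    (j : ℤ) : pentagramMap V (j + 1) = frameDet V j • (a j • V (j + 2) + c j • V j) := by
  have h₁ : det3 (V j) (V (j + 2)) (V (j + 3)) = -(b j * frameDet V j) := by
    simp only [hrec, frameDet, det3_apply, Pi.add_apply, Pi.smul_apply, smul_eq_mul]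
    ring
  have h₂ : det3 (V j) (V (j + 2)) (V (j + 1)) = -frameDet V j := by
    simp only [frameDet, det3_apply]
    ring
  rw [pentagramMap, add_sub_cancel_right, show j + 1 + 1 = j + 2 by ring,
    show j + 1 + 2 = j + 3 by ring, cross_cross_cross, h₁, h₂, hrec]
  module

lemma cross_cross_consecutive
    (hrec : ∀ j, V (j + 3) = a j • V (j + 2) + b j • V (j + 1) + c j • V j) (j : ℤ) :
    (V j ⨯₃ V (j + 1)) ⨯₃ (V (j - 2) ⨯₃ V (j - 1)) =
      frameDet V (j - 2) • (V (j + 1) - a (j - 2) • V j) := by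
  obtain ⟨i, rfl⟩ : ∃ i, j = i + 2 := ⟨j - 2, by ring⟩
  have h₁ : det3 (V (i + 2)) (V (i + 3)) (V (i + 1)) = c i * frameDet V i := by
    simp only [hrec, frameDet, det3_apply, Pi.add_apply, Pi.smul_apply, smul_eq_mul]
    ring
  have h₂ : det3 (V (i + 2)) (V (i + 3)) (V i) = -(b i * frameDet V i) := by
    simp only [hrec, frameDet, det3_apply, Pi.add_apply, Pi.smul_apply, smul_eq_mul]
    ring
  rw [add_sub_cancel_right, show i + 2 - 1 = i + 1 by ring, show i + 2 + 1 = i + 3 by ring,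
    cross_cross_cross, h₁, h₂, hrec]
  module

lemma smul_pentagramMap_sub_smul_pentagramMap
    (hrec : ∀ j, V (j + 3) = a j • V (j + 2) + b j • V (j + 1) + c j • V j) (j : ℤ) :
    frameDet V j • pentagramMap V (j + 2) -
        (a (j + 1) * frameDet V (j + 1)) • pentagramMap V (j + 1) =
      (frameDet V j * frameDet V (j + 1) * (c (j + 1) + a (j + 1) * b j)) • V (j + 1) := by
  have h := pentagramMap_succ hrec (j + 1)
  rw [show j + 1 + 1 = j + 2 by ring, show j + 1 + 2 = j + 3 by ring] at h
  rw [h, pentagramMap_succ hrec, hrec]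
  module

lemma det3_pentagramMap
    (hrec : ∀ j, V (j + 3) = a j • V (j + 2) + b j • V (j + 1) + c j • V j) (j : ℤ) :
    det3 (pentagramMap V (j + 1)) (pentagramMap V (j + 2)) (pentagramMap V (j + 3)) =
      frameDet V j * frameDet V (j + 1) ^ 2 * frameDet V (j + 2) *
        (c (j + 1) + a (j + 1) * b j) * (c (j + 2) + a (j + 2) * b (j + 1)) := by
  have h₂ := pentagramMap_succ hrec (j + 1)
  have h₃ := pentagramMap_succ hrec (j + 2)
  have r₁ := hrec (j + 1)
  simp only [add_assoc, Int.reduceAdd] at h₂ h₃ r₁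
  set P := colMat (V j) (V (j + 1)) (V (j + 2))
  have e₁ : pentagramMap V (j + 1) = P *ᵥ ![frameDet V j * c j, 0, frameDet V j * a j] := by
    rw [colMat_mulVec, pentagramMap_succ hrec]
    module
  have e₂ : pentagramMap V (j + 2) = P *ᵥ (frameDet V (j + 1) •
      ![a (j + 1) * c j, c (j + 1) + a (j + 1) * b j, a (j + 1) * a j]) := by
    rw [h₂, hrec, mulVec_smul, colMat_mulVec]
    module
  have e₃ : pentagramMap V (j + 3) = P *ᵥ (frameDet V (j + 2) •
      ![a (j + 2) * a (j + 1) * c j, a (j + 2) * (c (j + 1) + a (j + 1) * b j),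
        a (j + 2) * (a (j + 1) * a j + b (j + 1)) + c (j + 2)]) := by
    rw [h₃, r₁, hrec, mulVec_smul, colMat_mulVec]
    module
  rw [e₁, e₂, e₃, det3_mulVec, ← det3, ← frameDet, det3_apply]
  simp only [cons_val_zero, cons_val_one, cons_val, Pi.smul_apply, smul_eq_mul]
  rw [frameDet_succ hrec j]
  ring

lemma det3_sub_smul_of_rec
    (hrec : ∀ j, V (j + 3) = a j • V (j + 2) + b j • V (j + 1) + c j • V j)
    (j : ℤ) (x : ℝ) :
    det3 (V (j + 2) - x • V (j + 1)) (V j) (V (j - 1)) =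
      (x - a (j - 1)) * frameDet V (j - 1) := by
  obtain ⟨i, rfl⟩ : ∃ i, j = i + 1 := ⟨j - 1, by ring⟩
  rw [add_sub_cancel_right, show i + 1 + 2 = i + 3 by ring, show i + 1 + 1 = i + 2 by ring,
    hrec]
  simp only [frameDet, det3_apply, Pi.add_apply, Pi.sub_apply, Pi.smul_apply, smul_eq_mul]
  ring

end Recurrence

structure IsNormalizedSpiral (N : ℤ) (M : Matrix (Fin 3) (Fin 3) ℝ) (V : ℤ → Fin 3 → ℝ)
    (a b c : ℤ → ℝ) : Prop where
  recurrence : ∀ j, V (j + 3) = a j • V (j + 2) + b j • V (j + 1) + c j • V j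
  forward : ∀ k : ℤ, 1 ≤ k → V (N + k) = M *ᵥ pentagramMap V (k - 1)
  det_eq_one : M.det = 1
  frameDet_eq_one : ∀ j, 0 ≤ j → j ≤ N → frameDet V j = 1
  three_le : 3 ≤ N

namespace IsNormalizedSpiral

variable {N : ℤ} {M : Matrix (Fin 3) (Fin 3) ℝ} {V : ℤ → Fin 3 → ℝ}
  {a b c : ℤ → ℝ}

lemma mulVec_pentagramMap (hS : IsNormalizedSpiral N M V a b c) {j : ℤ} (hj : 0 ≤ j) :
    M *ᵥ pentagramMap V j = V (N + (j + 1)) := by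
  rw [hS.forward _ (by omega), add_sub_cancel_right]

lemma frameDet_add_eq (hS : IsNormalizedSpiral N M V a b c) {j : ℤ} (hj : -1 ≤ j) :
    frameDet V (N + (j + 2)) = frameDet V j * frameDet V (j + 1) ^ 2 * frameDet V (j + 2) *
      (c (j + 1) + a (j + 1) * b j) * (c (j + 2) + a (j + 2) * b (j + 1)) := by
  rw [← det3_pentagramMap hS.recurrence, ← one_mul (det3 _ _ _), ← hS.det_eq_one,
    ← det3_mulVec, hS.mulVec_pentagramMap (by omega), hS.mulVec_pentagramMap (by omega),
    hS.mulVec_pentagramMap (by omega), frameDet]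
  ring_nf

lemma smul_sub_smul_eq_smul_mulVec (hS : IsNormalizedSpiral N M V a b c) {j : ℤ} (hj : -1 ≤ j) :
    frameDet V j • V (N + (j + 3)) - (a (j + 1) * frameDet V (j + 1)) • V (N + (j + 2)) =
      (frameDet V j * frameDet V (j + 1) * (c (j + 1) + a (j + 1) * b j)) • M *ᵥ V (j + 1) := by
  rw [← mulVec_smul, ← smul_pentagramMap_sub_smul_pentagramMap hS.recurrence, mulVec_sub,
    mulVec_smul, mulVec_smul, hS.mulVec_pentagramMap (by omega),
    hS.mulVec_pentagramMap (by omega)]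
  ring_nf

lemma c_eq_one (hS : IsNormalizedSpiral N M V a b c) {j : ℤ} (h₀ : 0 ≤ j) (h₁ : j < N) :
    c j = 1 := by
  simpa [hS.frameDet_eq_one j h₀ h₁.le, hS.frameDet_eq_one (j + 1) (by omega) h₁]
    using (frameDet_succ hS.recurrence j).symm

lemma c_neg_one_mul_frameDet (hS : IsNormalizedSpiral N M V a b c) :
    c (-1) * frameDet V (-1) = 1 := by
  simpa [hS.frameDet_eq_one 0 le_rfl (by linarith [hS.three_le])]
    using (frameDet_succ hS.recurrence (-1)).symm

lemma c_end (hS : IsNormalizedSpiral N M V a b c) :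
    c N = frameDet V (-1) * (1 + a 0 * b (-1)) * (1 + a 1 * b 0) := by
  have hN := hS.three_le
  have h := hS.frameDet_add_eq (le_refl (-1))
  norm_num [hS.frameDet_eq_one 0 le_rfl (by omega), hS.frameDet_eq_one 1 (by omega) (by omega),
    frameDet_succ hS.recurrence, hS.frameDet_eq_one N (by omega) le_rfl,
    hS.c_eq_one le_rfl (by omega), hS.c_eq_one zero_le_one (by omega)] at h
  exact h

lemma c_end_succ_mul (hS : IsNormalizedSpiral N M V a b c) :
    c (N + 1) * c N = (1 + a 1 * b 0) * (1 + a 2 * b 1) := by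
  have hN := hS.three_le
  have h := hS.frameDet_add_eq (j := 0) (by norm_num)
  norm_num [hS.frameDet_eq_one 0 le_rfl (by omega), hS.frameDet_eq_one 1 (by omega) (by omega),
    hS.frameDet_eq_one 2 (by omega) (by omega), hS.c_eq_one zero_le_one (by omega),
    hS.c_eq_one zero_le_two (by omega)] at h
  rw [show N + 2 = N + 1 + 1 by ring, frameDet_succ hS.recurrence, frameDet_succ hS.recurrence,
    hS.frameDet_eq_one N (by omega) le_rfl, mul_one] at h
  exact h

lemma end_succ_eq (hS : IsNormalizedSpiral N M V a b c) :
    V (N + 1) = (frameDet V (-1) * a (-1)) • M *ᵥ V 1 + M *ᵥ V (-1) := by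
  have h := pentagramMap_succ hS.recurrence (-1)
  have h₁ := hS.mulVec_pentagramMap le_rfl
  norm_num at h h₁
  rw [← h₁, h, mulVec_add, mulVec_smul, mulVec_smul, mulVec_smul, mulVec_smul]
  linear_combination (norm := module) hS.c_neg_one_mul_frameDet • M *ᵥ V (-1)

lemma smul_mulVec_one (hS : IsNormalizedSpiral N M V a b c) :
    (1 + a 1 * b 0) • M *ᵥ V 1 = V (N + 3) - a 1 • V (N + 2) := by
  have hN := hS.three_le
  have h := hS.smul_sub_smul_eq_smul_mulVec (j := 0) (by norm_num)
  norm_num [hS.frameDet_eq_one 0 le_rfl (by omega), hS.frameDet_eq_one 1 (by omega) (by omega),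
    hS.c_eq_one zero_le_one (by omega)] at h
  exact h.symm

lemma smul_mulVec_zero (hS : IsNormalizedSpiral N M V a b c) :
    (1 + a 0 * b (-1)) • M *ᵥ V 0 = V (N + 2) - (a 0 * c (-1)) • V (N + 1) := by
  have hN := hS.three_le
  have h := hS.smul_sub_smul_eq_smul_mulVec le_rfl
  norm_num [hS.frameDet_eq_one 0 le_rfl (by omega), hS.c_eq_one le_rfl (by omega)] at h
  linear_combination (norm := module)
    (-c (-1)) • h - hS.c_neg_one_mul_frameDet • ((1 + a 0 * b (-1)) • M *ᵥ V 0 - V (N + 2))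

lemma mulVec_neg_one (hS : IsNormalizedSpiral N M V a b c)
    (hbwd : V (-1) = M⁻¹ *ᵥ
      (c (N + 1) • (V N ⨯₃ V (N + 1)) ⨯₃ (V (N - 2) ⨯₃ V (N - 1)))) :
    M *ᵥ V (-1) = c (N + 1) • (V (N + 1) - a (N - 2) • V N) := by
  rw [cross_cross_consecutive hS.recurrence,
    hS.frameDet_eq_one (N - 2) (by linarith [hS.three_le]) (by linarith), one_smul] at hbwd
  rw [hbwd, mulVec_mulVec, mul_nonsing_inv _ (by simp [hS.det_eq_one]), one_mulVec]

lemma end_relations (hS : IsNormalizedSpiral N M V a b c)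
    (hbwd : M *ᵥ V (-1) = c (N + 1) • (V (N + 1) - a (N - 2) • V N)) :
    frameDet V (-1) * a (-1) * c N = (1 + a 1 * b 0) * c (N + 1) * a (N - 2) ∧
      frameDet V (-1) * a (-1) * b N + (1 + a 1 * b 0) * c (N + 1) = 1 + a 1 * b 0 := by
  set P := frameDet V (-1) * a (-1)
  have hD : frameDet V N ≠ 0 := by
    rw [hS.frameDet_eq_one N (by linarith [hS.three_le]) le_rfl]
    exact one_ne_zero
  obtain ⟨hα, hβ, -⟩ := eq_of_smul_add_smul_add_smul_eq hD
    (show (0 : ℝ) • V N + (1 + a 1 * b 0) • V (N + 1) + (0 : ℝ) • V (N + 2) =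
      (P * c N - (1 + a 1 * b 0) * c (N + 1) * a (N - 2)) • V N +
      (P * b N + (1 + a 1 * b 0) * c (N + 1)) • V (N + 1) + (P * (a N - a 1)) • V (N + 2) by
    linear_combination (norm := module) (1 + a 1 * b 0) • hS.end_succ_eq +
      P • hS.smul_mulVec_one + (1 + a 1 * b 0) • hbwd + P • hS.recurrence N)
  exact ⟨sub_eq_zero.mp hα.symm, hβ.symm⟩

lemma a_end_pred (hS : IsNormalizedSpiral N M V a b c)
    (hseed : det3 (M *ᵥ V 0) (V N) (V (N - 1)) = 0) : a (N - 1) = a 0 * c (-1) := by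
  have h := det3_sub_smul_of_rec hS.recurrence N (a 0 * c (-1))
  rw [← hS.smul_mulVec_zero, det3_smul_left, hseed,
    hS.frameDet_eq_one (N - 1) (by linarith [hS.three_le]) (by omega)] at h
  linarith

end IsNormalizedSpiral

theorem end_invariants_general (N : ℕ) (hN : 5 ≤ N)
    (V : ℤ → Fin 3 → ℝ) (a b c : ℤ → ℝ)
    (hrec : ∀ j : ℤ, V (j + 3) = a j • V (j + 2) + b j • V (j + 1) + c j • V j)
    (ρ : ℤ → Matrix (Fin 3) (Fin 3) ℝ)
    (hρ : ∀ j : ℤ, ρ j = colMat (V j) (V (j + 1)) (V (j + 2)))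
    (hρinv : ∀ j : ℤ, IsUnit (ρ j))
    (M : Matrix (Fin 3) (Fin 3) ℝ) (hM : M.det = 1)
    (T : ℤ → Fin 3 → ℝ)
    (hT : ∀ j : ℤ, T j =
      crossProduct (crossProduct (V (j - 1)) (V (j + 1))) (crossProduct (V j) (V (j + 2))))
    (Tbar : ℤ → Fin 3 → ℝ)
    (hTbar : ∀ j : ℤ, Tbar j =
      c (j + 1) • crossProduct (crossProduct (V j) (V (j + 1)))
        (crossProduct (V (j - 2)) (V (j - 1))))
    (hfwd : ∀ k : ℤ, 1 ≤ k → V ((N : ℤ) + k) = M.mulVec (T (k - 1)))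
    (hbwd : ∀ k : ℤ, 1 ≤ k → V (-k) = M⁻¹.mulVec (Tbar ((N : ℤ) - k + 1)))
    (hnorm : ∀ j : ℤ, 0 ≤ j → j ≤ (N : ℤ) → (ρ j).det = 1)
    (ha : ∀ j : ℤ, a j ≠ 0)
    (hseed2 : det3 (M.mulVec (V 0)) (V (N : ℤ)) (V ((N : ℤ) - 1)) = 0)
    (A : ℤ → ℝ) (hA : ∀ j : ℤ, A j = c j + a j * b (j - 1))
    (hA1 : A 1 ≠ 0) :
    c (N : ℤ) = (c (N : ℤ) + b (N : ℤ) * a ((N : ℤ) - 2)) * c ((N : ℤ) + 1) ∧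
    c (-1) = A 0 * A 1 / c (N : ℤ) ∧
    b (N : ℤ) = (c (N : ℤ) / a ((N : ℤ) - 2)) * (c (N : ℤ) / (A 1 * A 2) - 1) ∧
    a (-1) = c ((N : ℤ) + 1) * a ((N : ℤ) - 1) * a ((N : ℤ) - 2) * (1 + a 1 * b 0) /
      (c (N : ℤ) * a 0) := by
  obtain rfl : T = pentagramMap V := funext hT
  have hD : ∀ j : ℤ, 0 ≤ j → j ≤ N → frameDet V j = 1 := fun j h₀ h₁ => by
    rw [← hnorm j h₀ h₁, hρ]; rfl
  have hS : IsNormalizedSpiral N M V a b c := ⟨hrec, hfwd, hM, hD, by omega⟩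
  have hc_ne : ∀ j, c j ≠ 0 := fun j => left_ne_zero_of_mul <| by
    rw [← frameDet_succ hrec, frameDet, det3, ← hρ]
    exact ((isUnit_iff_isUnit_det _).mp (hρinv _)).ne_zero
  have hA' : ∀ j : ℤ, 0 ≤ j → j < N → A j = 1 + a j * b (j - 1) := fun j h₀ h₁ => by
    rw [hA, hS.c_eq_one h₀ h₁]
  obtain ⟨hα, hβ⟩ := hS.end_relations <| hS.mulVec_neg_one <| by
    rw [hbwd 1 le_rfl, sub_add_cancel, hTbar]
  norm_num only [hA' 0 le_rfl (by omega), hA' 1 (by omega) (by omega),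
    hA' 2 (by omega) (by omega)] at hA1 ⊢
  have hi : c N = (c N + b N * a (N - 2)) * c (N + 1) :=
    mul_left_cancel₀ hA1 (by linear_combination b N * hα - c N * hβ)
  refine ⟨hi, ?_, ?_, ?_⟩
  · rw [eq_div_iff (hc_ne N)]
    linear_combination c (-1) * hS.c_end +
      (1 + a 0 * b (-1)) * (1 + a 1 * b 0) * hS.c_neg_one_mul_frameDet
  · rw [← hS.c_end_succ_mul]
    field_simp [hc_ne, ha]
    linear_combination -hi
  · rw [hS.a_end_pred hseed2, eq_div_iff (mul_ne_zero (hc_ne N) (ha 0))]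
    linear_combination a 0 * c (-1) * hα - a (-1) * c N * a 0 * hS.c_neg_one_mul_frameDet

/-- under the forward and backward spiral conditions, the
normalization `det ρ_j = 1` for `j = 0, …, N`, `a_j ≠ 0` for all `j`, and the
seed conditions, with `A_j = c_j + a_j·b_{j−1}` and `A₀, A₁, A₂` and
`c_N + b_N·a_{N−2}` nonzero, one has:
(i) `c_N = (c_N + b_N·a_{N−2})·c_{N+1}`; (ii) `c_{−1} = A₀·A₁/c_N`;
(iii) `b_N = (c_N/a_{N−2})·(c_N/(A₁·A₂) − 1)`; and
(iv) `a_{−1} = c_{N+1}·a_{N−1}·a_{N−2}·(1 + a₁·b₀)/(c_N·a₀)`. -/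
theorem end_invariants (N : ℕ) (hN : 5 ≤ N)
    (V : ℤ → Fin 3 → ℝ) (a b c : ℤ → ℝ)
    (hrec : ∀ j : ℤ, V (j + 3) = a j • V (j + 2) + b j • V (j + 1) + c j • V j)
    (ρ : ℤ → Matrix (Fin 3) (Fin 3) ℝ)
    (hρ : ∀ j : ℤ, ρ j = colMat (V j) (V (j + 1)) (V (j + 2)))
    (hρinv : ∀ j : ℤ, IsUnit (ρ j))
    (M : Matrix (Fin 3) (Fin 3) ℝ) (hM : M.det = 1)
    (T : ℤ → Fin 3 → ℝ)
    (hT : ∀ j : ℤ, T j =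
      crossProduct (crossProduct (V (j - 1)) (V (j + 1))) (crossProduct (V j) (V (j + 2))))
    (Tbar : ℤ → Fin 3 → ℝ)
    (hTbar : ∀ j : ℤ, Tbar j =
      c (j + 1) • crossProduct (crossProduct (V j) (V (j + 1)))
        (crossProduct (V (j - 2)) (V (j - 1))))
    (hfwd : ∀ k : ℤ, 1 ≤ k → V ((N : ℤ) + k) = M.mulVec (T (k - 1)))
    (hbwd : ∀ k : ℤ, 1 ≤ k → V (-k) = M⁻¹.mulVec (Tbar ((N : ℤ) - k + 1)))
    (hnorm : ∀ j : ℤ, 0 ≤ j → j ≤ (N : ℤ) → (ρ j).det = 1)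
    (ha : ∀ j : ℤ, a j ≠ 0)
    (hseed1 : det3 (V ((N : ℤ) + 1)) (M.mulVec (V 1)) (V (N : ℤ)) = 0)
    (hseed2 : det3 (M.mulVec (V 0)) (V (N : ℤ)) (V ((N : ℤ) - 1)) = 0)
    (A : ℤ → ℝ) (hA : ∀ j : ℤ, A j = c j + a j * b (j - 1))
    (hA0 : A 0 ≠ 0) (hA1 : A 1 ≠ 0) (hA2 : A 2 ≠ 0)
    (hBN : c (N : ℤ) + b (N : ℤ) * a ((N : ℤ) - 2) ≠ 0) :
    c (N : ℤ) = (c (N : ℤ) + b (N : ℤ) * a ((N : ℤ) - 2)) * c ((N : ℤ) + 1) ∧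
    c (-1) = A 0 * A 1 / c (N : ℤ) ∧
    b (N : ℤ) = (c (N : ℤ) / a ((N : ℤ) - 2)) * (c (N : ℤ) / (A 1 * A 2) - 1) ∧
    a (-1) = c ((N : ℤ) + 1) * a ((N : ℤ) - 1) * a ((N : ℤ) - 2) * (1 + a 1 * b 0) /
      (c (N : ℤ) * a 0) :=
  end_invariants_general N hN V a b c hrec ρ hρ hρinv M hM T hT Tbar hTbar hfwd hbwd hnorm ha hseed2
    A hA hA1
end
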